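/- In 𝒰, for every i ∈ I one has h_{i,2} = [b_{i,0}, b_{i,2}] = 0 and [b_{i,1}, b_{i,2}] = −h_{i,3}. -/

import Mathlib

noncomputable section

/-- Data of a symmetrizable generalized Cartan matrix `(c_{ij})` (of finite type size bounds)
together with a positive symmetrizer `(d_i)`. -/
structure CartanData (I : Type) [Fintype I] : Type where
  c : I → I → ℤ
  d : I → ℝ
  c_diag : ∀ i, c i i = 2
  c_nonpos : ∀ i j, i ≠ j → c i j ≤ 0
  c_zero_iff : ∀ i j, c i j = 0 ↔ c j i = 0
  c_bound : ∀ i j, i ≠ j → c i j * c j i ≤ 3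
  d_pos : ∀ i, 0 < d i
  d_symm : ∀ i j, d i * (c i j : ℝ) = d j * (c j i : ℝ)

/-- The pairing `(α_i, α_j) = d_i · c_{ij}`. -/
def CartanData.al {I : Type} [Fintype I] (A : CartanData I) (i j : I) : ℝ :=
  A.d i * (A.c i j : ℝ)

/-- Generators for Drinfeld-type presentations: `h i r` stands for `h_{i,2r+1}` and
`b i r` stands for `b_{i,r}`. -/
inductive TYGen (I : Type) : Type
  | h : I → ℕ → TYGen I
  | b : I → ℕ → TYGen I

section Algebras

variable {I : Type} [Fintype I] [DecidableEq I]

/-- The element `h_{i,r}` of the free algebra, for `r : ℤ`, with the conventions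
`h_{i,-1} = 1` and `h_{i,r} = 0` for `r` even or `r < -1`. -/
def TYh (i : I) (r : ℤ) : FreeAlgebra ℂ (TYGen I) :=
  if r = -1 then 1
  else if 0 ≤ r ∧ r % 2 = 1 then FreeAlgebra.ι ℂ (TYGen.h i ((r - 1) / 2).toNat)
  else 0

/-- The generator `b_{i,r}` of the free algebra. -/
def TYb (i : I) (r : ℕ) : FreeAlgebra ℂ (TYGen I) := FreeAlgebra.ι ℂ (TYGen.b i r)

/-- The generator `h_{i,2r+1}` of the free algebra. -/
def TYhodd (i : I) (r : ℕ) : FreeAlgebra ℂ (TYGen I) := FreeAlgebra.ι ℂ (TYGen.h i r)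

/-- The element `h_{i,n}` of the free algebra, `n : ℕ`, with the convention `h_{i,2r} = 0`. -/
def TYhnat (i : I) (n : ℕ) : FreeAlgebra ℂ (TYGen I) :=
  if n % 2 = 1 then FreeAlgebra.ι ℂ (TYGen.h i ((n - 1) / 2)) else 0

/-- Defining relations of the twisted Yangian `ᵢY` in Drinfeld presentation. -/
inductive TYRel (A : CartanData I) : FreeAlgebra ℂ (TYGen I) → FreeAlgebra ℂ (TYGen I) → Prop
  | ty0 (i j : I) (r s : ℤ) : TYRel A ⁅TYh i r, TYh j s⁆ 0
  | ty1 (i j : I) (r s : ℕ) :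
      TYRel A (⁅TYh i ((r : ℤ) + 1), TYb j s⁆ - ⁅TYh i ((r : ℤ) - 1), TYb j (s + 2)⁆)
        ((A.al i j : ℂ) •
            (TYh i ((r : ℤ) - 1) * TYb j (s + 1) + TYb j (s + 1) * TYh i ((r : ℤ) - 1))
          + (((A.al i j : ℂ) ^ 2 / 4) • ⁅TYh i ((r : ℤ) - 1), TYb j s⁆))
  | ty2 (i j : I) (r s : ℕ) :
      TYRel A (⁅TYb i (r + 1), TYb j s⁆ - ⁅TYb i r, TYb j (s + 1)⁆)
        (((A.al i j : ℂ) / 2) • (TYb i r * TYb j s + TYb j s * TYb i r)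
          - (if i = j then (2 : ℂ) * (-1 : ℂ) ^ s else 0) • TYh i ((r : ℤ) + (s : ℤ) + 1))
  | serre0 (i j : I) (hc : A.c i j = 0) : TYRel A ⁅TYb i 0, TYb j 0⁆ 0
  | serre1 (i j : I) (hc : A.c i j = -1) :
      TYRel A ⁅TYb i 0, ⁅TYb i 0, TYb j 0⁆⁆ ((-(A.d i : ℂ)) • TYb j 0)
  | serre2 (i j : I) (hc : A.c i j = -2) :
      TYRel A ⁅TYb i 0, ⁅TYb i 0, ⁅TYb i 0, TYb j 0⁆⁆⁆
        (((-4 : ℂ) * (A.d i : ℂ)) • ⁅TYb i 0, TYb j 0⁆)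
  | serre3 (i j : I) (hc : A.c i j = -3) :
      TYRel A ⁅TYb i 0, ⁅TYb i 0, ⁅TYb i 0, ⁅TYb i 0, TYb j 0⁆⁆⁆⁆
        (((-10 : ℂ) * (A.d i : ℂ)) • ⁅TYb i 0, ⁅TYb i 0, TYb j 0⁆⁆
          + ((-9 : ℂ) * (A.d i : ℂ) ^ 2) • TYb j 0)

/-- The twisted Yangian `ᵢY` in Drinfeld presentation. -/
abbrev TY (A : CartanData I) : Type := RingQuot (TYRel A)

/-- The generator `h_{i,2r+1}` of the twisted Yangian `ᵢY`. -/
def tyH (A : CartanData I) (i : I) (r : ℕ) : TY A :=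
  RingQuot.mkAlgHom ℂ (TYRel A) (TYhodd i r)

/-- The generator `b_{i,r}` of the twisted Yangian `ᵢY`. -/
def tyB (A : CartanData I) (i : I) (r : ℕ) : TY A :=
  RingQuot.mkAlgHom ℂ (TYRel A) (TYb i r)

/-- Defining relations of the algebra `𝔅` (the presentation of `U(g[z]^ω̌)`). -/
inductive BRel (A : CartanData I) : FreeAlgebra ℂ (TYGen I) → FreeAlgebra ℂ (TYGen I) → Prop
  | hh (i j : I) (r s : ℕ) : BRel A ⁅TYhodd i r, TYhodd j s⁆ 0
  | hb (i j : I) (r s : ℕ) :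
      BRel A ⁅TYhodd i r, TYb j s⁆ ((2 * (A.al i j : ℂ)) • TYb j (2 * r + s + 1))
  | bb (i j : I) (r s : ℕ) :
      BRel A (⁅TYb i (r + 1), TYb j s⁆ - ⁅TYb i r, TYb j (s + 1)⁆)
        ((-(if i = j then (-1 : ℂ) ^ r + (-1 : ℂ) ^ s else 0)) • TYhnat i (r + s + 1))
  | serre0 (i j : I) (hc : A.c i j = 0) : BRel A ⁅TYb i 0, TYb j 0⁆ 0
  | serre1 (i j : I) (hc : A.c i j = -1) :
      BRel A ⁅TYb i 0, ⁅TYb i 0, TYb j 0⁆⁆ ((-(A.d i : ℂ)) • TYb j 0)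
  | serre2 (i j : I) (hc : A.c i j = -2) :
      BRel A ⁅TYb i 0, ⁅TYb i 0, ⁅TYb i 0, TYb j 0⁆⁆⁆
        (((-4 : ℂ) * (A.d i : ℂ)) • ⁅TYb i 0, TYb j 0⁆)
  | serre3 (i j : I) (hc : A.c i j = -3) :
      BRel A ⁅TYb i 0, ⁅TYb i 0, ⁅TYb i 0, ⁅TYb i 0, TYb j 0⁆⁆⁆⁆
        (((-10 : ℂ) * (A.d i : ℂ)) • ⁅TYb i 0, ⁅TYb i 0, TYb j 0⁆⁆
          + ((-9 : ℂ) * (A.d i : ℂ) ^ 2) • TYb j 0)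

/-- The algebra `𝔅`. -/
abbrev BAlg (A : CartanData I) : Type := RingQuot (BRel A)

/-- The generator `h_{i,2r+1}` of `𝔅`. -/
def hB (A : CartanData I) (i : I) (r : ℕ) : BAlg A :=
  RingQuot.mkAlgHom ℂ (BRel A) (TYhodd i r)

/-- The generator `b_{i,r}` of `𝔅`. -/
def bB (A : CartanData I) (i : I) (r : ℕ) : BAlg A :=
  RingQuot.mkAlgHom ℂ (BRel A) (TYb i r)

end Algebras

/-- Generators `h_{i,1}`, `b_{i,0}`, `b_{i,1}` for the minimalistic presentations. -/
inductive MinGen (I : Type) : Type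
  | h1 : I → MinGen I
  | b0 : I → MinGen I
  | b1 : I → MinGen I

section MinAlgebras

variable {I : Type} [Fintype I] [DecidableEq I]

/-- The generator `h_{i,1}` of the free algebra. -/
def mh (i : I) : FreeAlgebra ℂ (MinGen I) := FreeAlgebra.ι ℂ (MinGen.h1 i)

/-- The generator `b_{i,0}` of the free algebra. -/
def mb0 (i : I) : FreeAlgebra ℂ (MinGen I) := FreeAlgebra.ι ℂ (MinGen.b0 i)

/-- The generator `b_{i,1}` of the free algebra. -/
def mb1 (i : I) : FreeAlgebra ℂ (MinGen I) := FreeAlgebra.ι ℂ (MinGen.b1 i)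

/-- Defining relations of the minimalistic presentation `ᵢY^min`. -/
inductive MinRel (A : CartanData I) : FreeAlgebra ℂ (MinGen I) → FreeAlgebra ℂ (MinGen I) → Prop
  | hh (i j : I) : MinRel A ⁅mh i, mh j⁆ 0
  | hb (i j : I) : MinRel A ⁅mh i, mb0 j⁆ ((2 * (A.al i j : ℂ)) • mb1 j)
  | bb (i j : I) :
      MinRel A (⁅mb1 i, mb0 j⁆ - ⁅mb0 i, mb1 j⁆)
        (((A.al i j : ℂ) / 2) • (mb0 i * mb0 j + mb0 j * mb0 i)
          - (if i = j then (2 : ℂ) else 0) • mh i)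
  | serre0 (i j : I) (hc : A.c i j = 0) : MinRel A ⁅mb0 i, mb0 j⁆ 0
  | serre1 (i j : I) (hc : A.c i j = -1) :
      MinRel A ⁅mb0 i, ⁅mb0 i, mb0 j⁆⁆ ((-(A.d i : ℂ)) • mb0 j)
  | serre2 (i j : I) (hc : A.c i j = -2) :
      MinRel A ⁅mb0 i, ⁅mb0 i, ⁅mb0 i, mb0 j⁆⁆⁆ (((-4 : ℂ) * (A.d i : ℂ)) • ⁅mb0 i, mb0 j⁆)
  | serre3 (i j : I) (hc : A.c i j = -3) :
      MinRel A ⁅mb0 i, ⁅mb0 i, ⁅mb0 i, ⁅mb0 i, mb0 j⁆⁆⁆⁆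
        (((-10 : ℂ) * (A.d i : ℂ)) • ⁅mb0 i, ⁅mb0 i, mb0 j⁆⁆
          + ((-9 : ℂ) * (A.d i : ℂ) ^ 2) • mb0 j)

/-- The relations of `ᵢY^min` together with the additional relation
`[h_{i₀,1},[b_{i₀,1},[h_{i₀,1},b_{i₀,1}]]] = (α_{i₀},α_{i₀})² [b_{i₀,1}², h_{i₀,1}]`. -/
inductive MinRelP (A : CartanData I) (i₀ : I) :
    FreeAlgebra ℂ (MinGen I) → FreeAlgebra ℂ (MinGen I) → Prop
  | base {x y : FreeAlgebra ℂ (MinGen I)} : MinRel A x y → MinRelP A i₀ x y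
  | extra : MinRelP A i₀ ⁅mh i₀, ⁅mb1 i₀, ⁅mh i₀, mb1 i₀⁆⁆⁆
      (((A.al i₀ i₀ : ℂ) ^ 2) • ⁅mb1 i₀ * mb1 i₀, mh i₀⁆)

/-- Defining relations of the algebra `𝒰`. -/
inductive URel (A : CartanData I) : FreeAlgebra ℂ (MinGen I) → FreeAlgebra ℂ (MinGen I) → Prop
  | hh (i j : I) : URel A ⁅mh i, mh j⁆ 0
  | hb (i j : I) : URel A ⁅mh i, mb0 j⁆ ((2 * (A.al i j : ℂ)) • mb1 j)
  | bb (i j : I) :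
      URel A ⁅mb1 i, mb0 j⁆ (⁅mb0 i, mb1 j⁆ - (if i = j then (2 : ℂ) else 0) • mh i)
  | serre0 (i j : I) (hc : A.c i j = 0) : URel A ⁅mb0 i, mb0 j⁆ 0
  | serre1 (i j : I) (hc : A.c i j = -1) :
      URel A ⁅mb0 i, ⁅mb0 i, mb0 j⁆⁆ ((-(A.d i : ℂ)) • mb0 j)
  | serre2 (i j : I) (hc : A.c i j = -2) :
      URel A ⁅mb0 i, ⁅mb0 i, ⁅mb0 i, mb0 j⁆⁆⁆ (((-4 : ℂ) * (A.d i : ℂ)) • ⁅mb0 i, mb0 j⁆)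
  | serre3 (i j : I) (hc : A.c i j = -3) :
      URel A ⁅mb0 i, ⁅mb0 i, ⁅mb0 i, ⁅mb0 i, mb0 j⁆⁆⁆⁆
        (((-10 : ℂ) * (A.d i : ℂ)) • ⁅mb0 i, ⁅mb0 i, mb0 j⁆⁆
          + ((-9 : ℂ) * (A.d i : ℂ) ^ 2) • mb0 j)

/-- The relations of `𝒰` together with the additional relation
`[h_{i₀,1},[b_{i₀,1},[h_{i₀,1},b_{i₀,1}]]] = 0`. -/
inductive URelP (A : CartanData I) (i₀ : I) :
    FreeAlgebra ℂ (MinGen I) → FreeAlgebra ℂ (MinGen I) → Prop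
  | base {x y : FreeAlgebra ℂ (MinGen I)} : URel A x y → URelP A i₀ x y
  | extra : URelP A i₀ ⁅mh i₀, ⁅mb1 i₀, ⁅mh i₀, mb1 i₀⁆⁆⁆ 0

/-- The algebra `𝒰`. -/
abbrev UAlg (A : CartanData I) : Type := RingQuot (URel A)

/-- The generator `h_{i,1}` of `𝒰`. -/
def uH1 (A : CartanData I) (i : I) : UAlg A := RingQuot.mkAlgHom ℂ (URel A) (mh i)

/-- The generator `b_{i,0}` of `𝒰`. -/
def uB0 (A : CartanData I) (i : I) : UAlg A := RingQuot.mkAlgHom ℂ (URel A) (mb0 i)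

/-- The generator `b_{i,1}` of `𝒰`. -/
def uB1 (A : CartanData I) (i : I) : UAlg A := RingQuot.mkAlgHom ℂ (URel A) (mb1 i)

/-- The elements `b_{i,r}` of `𝒰`, defined recursively by
`b_{i,r+1} := (2(α_i,α_i))⁻¹ [h_{i,1}, b_{i,r}]` for `r ≥ 1`. -/
def uB (A : CartanData I) (i : I) : ℕ → UAlg A
  | 0 => uB0 A i
  | 1 => uB1 A i
  | r + 2 => (2 * (A.al i i : ℂ))⁻¹ • ⁅uH1 A i, uB A i (r + 1)⁆

/-- The elements `h_{i,r}` of `𝒰`: `h_{i,0} := 0`, `h_{i,1}` is the generator, and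
`h_{i,r+1} := [b_{i,0}, b_{i,r+1}]` for `r ≥ 1`. -/
def uH (A : CartanData I) (i : I) : ℕ → UAlg A
  | 0 => 0
  | 1 => uH1 A i
  | r + 2 => ⁅uB0 A i, uB A i (r + 2)⁆

end MinAlgebras

/-!
Write `c = 2(α_i,α_i)`, which is nonzero. The only inputs are `[h_{i,1}, b_{i,0}] = c b_{i,1}` and
`[b_{i,0}, b_{i,1}] = h_{i,1}` (the relation `[b_{i,1}, b_{i,0}] = [b_{i,0}, b_{i,1}] - 2h_{i,1}` at
`j = i`). By the Jacobi identity, `[b_{i,0}, [h_{i,1}, x]] = [h_{i,1}, [b_{i,0}, x]] - c [b_{i,1}, x]`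
for every `x`. At `x = b_{i,1}` both terms vanish, so `c h_{i,2} = [b_{i,0}, [h_{i,1}, b_{i,1}]] = 0`;
at `x = b_{i,2}` the first term vanishes by what was just shown, and dividing by `c` gives
`h_{i,3} = -[b_{i,1}, b_{i,2}]`.
-/

theorem lie_inv_smul_lie_of_lie_eq_smul {K L : Type*} [Field K] [LieRing L] [LieAlgebra K L]
    {h b₀ b₁ : L} {c : K} (hc : c ≠ 0) (hhb : ⁅h, b₀⁆ = c • b₁) (x : L) :
    ⁅b₀, c⁻¹ • ⁅h, x⁆⁆ = c⁻¹ • ⁅h, ⁅b₀, x⁆⁆ - ⁅b₁, x⁆ := by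
  rw [lie_smul, leibniz_lie, ← lie_skew b₀ h, hhb, neg_lie, smul_lie, smul_add, smul_neg,
    inv_smul_smul₀ hc]
  abel

namespace CartanData

variable {I : Type} [Fintype I] (A : CartanData I)

theorem al_self (i : I) : A.al i i = 2 * A.d i := by
  simp [al, A.c_diag i, mul_comm]

theorem two_mul_al_self_ne_zero (i : I) : (2 * (A.al i i : ℂ)) ≠ 0 := by
  rw [al_self]
  have := A.d_pos i
  norm_cast
  positivity

end CartanData

section UAlg

attribute [local instance 100] LieRing.ofAssociativeRing

variable {I : Type} [Fintype I] [DecidableEq I] (A : CartanData I) (i : I)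

theorem uH1_lie_uB0 : ⁅uH1 A i, uB0 A i⁆ = (2 * (A.al i i : ℂ)) • uB1 A i := by
  simpa [uH1, uB0, uB1, Ring.lie_def] using RingQuot.mkAlgHom_rel ℂ (URel.hb (A := A) i i)

theorem uB0_lie_uB1 : ⁅uB0 A i, uB1 A i⁆ = uH1 A i := by
  have hbb : ⁅uB1 A i, uB0 A i⁆ = ⁅uB0 A i, uB1 A i⁆ - (2 : ℂ) • uH1 A i := by
    simpa [uH1, uB0, uB1, Ring.lie_def] using RingQuot.mkAlgHom_rel ℂ (URel.bb (A := A) i i)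
  rw [← lie_skew] at hbb
  linear_combination (norm := module) (-(2 : ℂ)⁻¹) • hbb

theorem uB0_lie_uB_two : ⁅uB0 A i, uB A i 2⁆ = 0 :=
  (lie_inv_smul_lie_of_lie_eq_smul (A.two_mul_al_self_ne_zero i) (uH1_lie_uB0 A i)
    (uB1 A i)).trans <| by rw [uB0_lie_uB1, lie_self, lie_self, smul_zero, sub_zero]

theorem uH_three : uH A i 3 = -⁅uB A i 1, uB A i 2⁆ :=
  (lie_inv_smul_lie_of_lie_eq_smul (A.two_mul_al_self_ne_zero i) (uH1_lie_uB0 A i)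
    (uB A i 2)).trans <| by rw [uB0_lie_uB_two, lie_zero, smul_zero, zero_sub]; rfl

end UAlg

theorem U_hi2_eq_zero_general
    {I : Type} [Fintype I] [DecidableEq I] (A : CartanData I) (i : I) :
    uH A i 2 = 0 ∧ ⁅uB A i 0, uB A i 2⁆ = 0 ∧ ⁅uB A i 1, uB A i 2⁆ = -uH A i 3 :=
  ⟨uB0_lie_uB_two A i, uB0_lie_uB_two A i, by rw [uH_three, neg_neg]⟩

/-- in `𝒰`, `h_{i,2} = [b_{i,0}, b_{i,2}] = 0` and
`[b_{i,1}, b_{i,2}] = -h_{i,3}`. -/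
theorem U_hi2_eq_zero
    {I : Type} [Fintype I] [DecidableEq I] [Nonempty I] (A : CartanData I) (i : I) :
    uH A i 2 = 0 ∧ ⁅uB A i 0, uB A i 2⁆ = 0 ∧ ⁅uB A i 1, uB A i 2⁆ = -uH A i 3 :=
  U_hi2_eq_zero_general A i
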